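/- arXiv:1403.6307 — 7 statements merged into one kernel-verified Lean document; each statement's English description precedes it below -/
import Mathlib

section
/- If d is a finite sequence of positive integers of length n with maximum element a and minimum element b, and nb ≥ (a+b)²/4, then d is bipartite graphic (i.e., there exists a simple bipartite graph whose two parts each have d as their list of vertex degrees). -/
/-- A finite sequence `d` of length `n` is *bipartite graphic* if there is a simple
bipartite graph (given by its biadjacency matrix) whose two parts each have `d` as
their list of vertex degrees (the second part's degrees being a permutation of `d`). -/
def BipartiteGraphic {n : ℕ} (d : Fin n → ℕ) : Prop :=
  ∃ M : Fin n → Fin n → Bool, ∃ e : Equiv.Perm (Fin n),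
    (∀ i, (∑ j, if M i j then 1 else 0) = d i) ∧
    (∀ j, (∑ i, if M i j then 1 else 0) = d (e j))

/-!
By the Gale–Ryser theorem it suffices to check `∑ i ∈ A, d i ≤ ∑ j, min (d j) #A` for every set
`A` of `p` rows. Capping each of the `p` terms at `p` loses at most `p (a - p)`, while the
`n - p` rows outside `A` contribute at least `(n - p) min(b, p)` to the right-hand side, and
`p (a - p) ≤ (n - p) min(b, p)` follows from `4 p (a - p + b) ≤ (a + b)² ≤ 4 n b` (AM–GM).

The sufficiency half of Gale–Ryser is proved by the classical greedy construction: a nonzero row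
`i₀` is joined to the `r i₀` columns of largest remaining degree, and the condition survives
this step.
-/

open Finset

/-- The Gale–Ryser condition, stated for all sets of rows rather than only initial segments of
the decreasingly sorted row sums. -/
def GaleRyserCondition {ι κ : Type*} [Fintype κ] (r : ι → ℕ) (c : κ → ℕ) : Prop :=
  ∀ A : Finset ι, ∑ i ∈ A, r i ≤ ∑ j, min (c j) #A

theorem exists_card_eq_and_le_of_mem_of_notMem {κ β : Type*} [Fintype κ] [DecidableEq κ]
    [LinearOrder β] (f : κ → β) {k : ℕ} (hk : k ≤ Fintype.card κ) :
    ∃ T : Finset κ, #T = k ∧ ∀ j ∈ T, ∀ j' ∉ T, f j' ≤ f j := by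
  induction k with
  | zero => exact ⟨∅, rfl, by simp⟩
  | succ k ih =>
    obtain ⟨T, hTcard, hTtop⟩ := ih (by omega)
    have hne : Tᶜ.Nonempty := by
      rw [← card_pos, card_compl]
      omega
    obtain ⟨j₀, hj₀, hj₀max⟩ := exists_max_image Tᶜ f hne
    rw [mem_compl] at hj₀
    refine ⟨insert j₀ T, by rw [card_insert_of_notMem hj₀, hTcard], ?_⟩
    intro j hj j' hj'
    rw [mem_insert, not_or] at hj'
    rcases mem_insert.mp hj with rfl | hjT
    · exact hj₀max j' (mem_compl.mpr hj'.2)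
    · exact hTtop j hjT j' hj'.2

namespace GaleRyserCondition

variable {ι κ : Type*} [Fintype κ] {r : ι → ℕ} {c : κ → ℕ}

lemma le_card_pos (hrc : GaleRyserCondition r c) (i : ι) : r i ≤ #{j | 0 < c j} := by
  classical
  calc r i ≤ ∑ j, min (c j) 1 := by simpa using hrc {i}
    _ = #{j | 0 < c j} := by
      rw [card_filter]
      exact sum_congr rfl fun j _ => by split_ifs <;> omega

lemma pos_of_mem {T : Finset κ} (hrc : GaleRyserCondition r c) {i : ι} (hT : #T = r i)
    (htop : ∀ j ∈ T, ∀ j' ∉ T, c j' ≤ c j) : ∀ j ∈ T, 0 < c j := by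
  classical
  intro j hj
  by_contra! hcj
  have hsub : ({j' | 0 < c j'} : Finset κ) ⊆ T.erase j := fun j' hj' => by
    rw [mem_filter] at hj'
    have hj'T : j' ∈ T := by
      by_contra hno
      have := htop j hj j' hno
      omega
    exact mem_erase.mpr ⟨by rintro rfl; omega, hj'T⟩
  have := (hrc.le_card_pos i).trans (card_le_card hsub)
  rw [card_erase_of_mem hj, hT] at this
  have : 0 < r i := hT ▸ card_pos.mpr ⟨j, hj⟩
  omega

lemma update_zero_tsub [DecidableEq ι] [DecidableEq κ] (hrc : GaleRyserCondition r c) {i₀ : ι}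
    {T : Finset κ} (hT : #T = r i₀) (htop : ∀ j ∈ T, ∀ j' ∉ T, c j' ≤ c j) :
    GaleRyserCondition (Function.update r i₀ 0) (fun j => c j - if j ∈ T then 1 else 0) := by
  have hnotMem : ∀ A : Finset ι, i₀ ∉ A →
      ∑ i ∈ A, r i ≤ ∑ j, min (c j - if j ∈ T then 1 else 0) #A := by
    intro A hA
    by_cases hsat : ∃ j' ∉ T, #A < c j'
    · -- every column of `T` then still has degree at least `#A` after the decrement
      obtain ⟨j', hj'T, hj'⟩ := hsat
      calc ∑ i ∈ A, r i ≤ ∑ j, min (c j) #A := hrc A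
        _ = ∑ j, min (c j - if j ∈ T then 1 else 0) #A := sum_congr rfl fun j _ => by
          by_cases hj : j ∈ T
          · have := htop j hj j' hj'T
            simp only [hj, if_true]
            omega
          · simp [hj]
    · -- all columns outside `T` have degree at most `#A`; use the condition for `insert i₀ A`
      push Not at hsat
      have hcol : ∀ j, min (c j) (#A + 1) ≤
          min (c j - if j ∈ T then 1 else 0) #A + if j ∈ T then 1 else 0 := fun j => by
        by_cases hj : j ∈ T
        · simp only [hj, if_true]
          omega
        · have := hsat j hj
          simp only [hj, if_false]
          omega
      have hins := hrc (insert i₀ A)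
      rw [sum_insert hA, card_insert_of_notMem hA] at hins
      have := (hins.trans (sum_le_sum fun j _ => hcol j)).trans_eq
        (by rw [sum_add_distrib, sum_boole, filter_mem_eq_inter, univ_inter, hT, Nat.cast_id])
      omega
  intro A
  calc ∑ i ∈ A, Function.update r i₀ 0 i = ∑ i ∈ A.erase i₀, r i := by
        rw [← sum_erase A (Function.update_self i₀ 0 r)]
        exact sum_congr rfl fun i hi => Function.update_of_ne (ne_of_mem_erase hi) _ _
    _ ≤ ∑ j, min (c j - if j ∈ T then 1 else 0) #(A.erase i₀) := hnotMem _ (notMem_erase _ _)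
    _ ≤ _ := sum_le_sum fun j _ => min_le_min_left _ (card_le_card (erase_subset _ _))

end GaleRyserCondition

variable {ι κ : Type*} [Fintype ι] [Fintype κ] [DecidableEq ι] [DecidableEq κ]

lemma exists_bool_matrix_add_row {M : ι → κ → Bool} {i₀ : ι} (hM : ∀ j, M i₀ j = false)
    (T : Finset κ) : ∃ M' : ι → κ → Bool,
      (∀ i, (∑ j, if M' i j then 1 else 0) =
        (∑ j, if M i j then 1 else 0) + if i = i₀ then #T else 0) ∧
      (∀ j, (∑ i, if M' i j then 1 else 0) =
        (∑ i, if M i j then 1 else 0) + if j ∈ T then 1 else 0) := by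
  have hcell : ∀ i j, (if (M i j || (decide (i = i₀) && decide (j ∈ T))) then 1 else 0) =
      (if M i j then 1 else 0) + if i = i₀ ∧ j ∈ T then 1 else 0 := fun i j => by
    by_cases hi : i = i₀
    · subst hi
      by_cases hj : j ∈ T <;> simp [hM, hj]
    · simp [hi]
  refine ⟨fun i j => M i j || (decide (i = i₀) && decide (j ∈ T)), fun i => ?_, fun j => ?_⟩
  · simp only [hcell, sum_add_distrib]
    by_cases hi : i = i₀ <;> simp [hi]
  · simp only [hcell, sum_add_distrib]
    by_cases hj : j ∈ T <;> simp [hj]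

theorem exists_bool_matrix_of_galeRyserCondition {r : ι → ℕ} {c : κ → ℕ}
    (hsum : ∑ i, r i = ∑ j, c j) (hrc : GaleRyserCondition r c) :
    ∃ M : ι → κ → Bool, (∀ i, (∑ j, if M i j then 1 else 0) = r i) ∧
      (∀ j, (∑ i, if M i j then 1 else 0) = c j) := by
  induction hs : ∑ i, r i using Nat.strong_induction_on generalizing r c with
  | _ s ih =>
    by_cases hr : ∀ i, r i = 0
    · have hc : ∀ j, c j = 0 := fun j => by
        rw [sum_eq_zero fun i _ => hr i, eq_comm, sum_eq_zero_iff] at hsum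
        exact hsum j (mem_univ j)
      exact ⟨fun _ _ => false, by simp [hr], by simp [hc]⟩
    push Not at hr
    obtain ⟨i₀, hi₀⟩ := hr
    obtain ⟨T, hT, htop⟩ := exists_card_eq_and_le_of_mem_of_notMem c
      ((hrc.le_card_pos i₀).trans (card_le_univ _))
    have hpos := hrc.pos_of_mem hT htop
    have hr : ∀ i, r i = Function.update r i₀ 0 i + if i = i₀ then #T else 0 := fun i => by
      by_cases hi : i = i₀
      · subst hi
        simp [hT]
      · simp [hi]
    have hc : ∀ j, c j = (c j - if j ∈ T then 1 else 0) + if j ∈ T then 1 else 0 := fun j => by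
      by_cases hj : j ∈ T
      · have := hpos j hj
        simp only [hj, if_true]
        omega
      · simp [hj]
    have hsumr : ∑ i, r i = ∑ i, Function.update r i₀ 0 i + #T := by
      rw [sum_congr rfl fun i _ => hr i, sum_add_distrib]
      simp
    have hsumc : ∑ j, c j = ∑ j, (c j - if j ∈ T then 1 else 0) + #T := by
      rw [sum_congr rfl fun j _ => hc j, sum_add_distrib]
      simp
    obtain ⟨M, hrow, hcol⟩ := ih _ (by omega) (by omega) (hrc.update_zero_tsub hT htop) rfl
    have hM : ∀ j, M i₀ j = false := fun j => by
      have := hrow i₀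
      rw [Function.update_self, sum_eq_zero_iff] at this
      simpa using this j (mem_univ j)
    obtain ⟨M', hrow', hcol'⟩ := exists_bool_matrix_add_row hM T
    exact ⟨M', fun i => by rw [hrow', hrow, ← hr], fun j => by rw [hcol', hcol, ← hc]⟩

lemma mul_tsub_le_tsub_mul_min {n a b p : ℕ} (h : (a + b) ^ 2 ≤ 4 * n * b) (hpn : p ≤ n) :
    p * (a - p) ≤ (n - p) * min b p := by
  have han : a ≤ n := by
    rcases Nat.eq_zero_or_pos b with rfl | hb
    · nlinarith
    · have : a * b ≤ n * b := by nlinarith [sq_nonneg ((a : ℤ) - b)]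
      exact Nat.le_of_mul_le_mul_right this hb
  rcases le_total b p with hbp | hpb
  · rw [min_eq_left hbp]
    rcases le_total p a with hpa | hap
    · obtain ⟨q, rfl⟩ := Nat.exists_eq_add_of_le hpa
      obtain ⟨m, rfl⟩ := Nat.exists_eq_add_of_le hpn
      simp only [Nat.add_sub_cancel_left]
      nlinarith [sq_nonneg ((p : ℤ) - q - b)]
    · rw [Nat.sub_eq_zero_of_le hap, mul_zero]
      exact Nat.zero_le _
  · rw [min_eq_right hpb, mul_comm]
    exact Nat.mul_le_mul (by omega) le_rfl

lemma galeRyserCondition_self_of_sq_le {d : ι → ℕ} {a b : ℕ} (hub : ∀ i, d i ≤ a)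
    (hlb : ∀ i, b ≤ d i) (h : (a + b) ^ 2 ≤ 4 * Fintype.card ι * b) :
    GaleRyserCondition d d := by
  intro A
  have hcap : ∑ i ∈ A, d i ≤ ∑ i ∈ A, min (d i) #A + #A * (a - #A) := by
    rw [← smul_eq_mul, ← sum_const, ← sum_add_distrib]
    exact sum_le_sum fun i _ => by have := hub i; omega
  have hrest : (Fintype.card ι - #A) * min b #A ≤ ∑ i ∈ univ \ A, min (d i) #A := by
    rw [← card_compl, ← compl_eq_univ_sdiff, ← smul_eq_mul]
    exact card_nsmul_le_sum _ _ _ fun i _ => min_le_min_right _ (hlb i)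
  have hsplit := sum_sdiff (subset_univ A) (f := fun j => min (d j) #A)
  have := mul_tsub_le_tsub_mul_min h (card_le_univ A)
  omega

theorem stmt_0_general (n a b : ℕ) (d : Fin n → ℕ)
    (hmax : (∀ i, d i ≤ a) ∧ ∃ i, d i = a)
    (hmin : (∀ i, b ≤ d i) ∧ ∃ i, d i = b)
    (h : 4 * n * b ≥ (a + b) ^ 2) :
    BipartiteGraphic d := by
  have hrc : GaleRyserCondition d d :=
    galeRyserCondition_self_of_sq_le hmax.1 hmin.1 (by simpa using h)
  obtain ⟨M, hrow, hcol⟩ := exists_bool_matrix_of_galeRyserCondition rfl hrc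
  exact ⟨M, Equiv.refl _, hrow, hcol⟩

theorem stmt_0 (n a b : ℕ) (hn : 0 < n) (d : Fin n → ℕ)
    (hpos : ∀ i, 0 < d i)
    (hmax : (∀ i, d i ≤ a) ∧ ∃ i, d i = a)
    (hmin : (∀ i, b ≤ d i) ∧ ∃ i, d i = b)
    (h : 4 * n * b ≥ (a + b) ^ 2) :
    BipartiteGraphic d :=
  stmt_0_general n a b d hmax hmin h
end

section
/- Let a, b, n, s be positive integers with b < a ≤ n and s ≤ n. The sequence (a^s, b^{n-s}) (i.e., s copies of a followed by n−s copies of b) is bipartite graphic if and only if s² − (a+b)s + nb ≥ 0. -/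
/-! Necessity: the first `s` rows carry `s * a` edges, and column `j` receives at most
`min s (deg j)` of them, so `s * a ≤ s * min s a + (n - s) * min s b ≤ s * s + (n - s) * b`.
Sufficiency: split every degree `d k` into `r k ≤ s` edges towards the first `s` columns and
`d k - r k ≤ n - s` towards the others, with totals `s * a` and `(n - s) * b`; the inequality is
exactly what makes such a split possible. Each of the two blocks is then filled row after row,
cyclically modulo its number of columns, which balances the column sums. -/

open Finset

theorem exists_le_le_sum_eq {ι : Type*} (S : Finset ι) (l u : ι → ℕ) (hlu : ∀ i ∈ S, l i ≤ u i)
    {T : ℕ} (hl : ∑ i ∈ S, l i ≤ T) (hu : T ≤ ∑ i ∈ S, u i) :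
    ∃ r : ι → ℕ, (∀ i ∈ S, l i ≤ r i ∧ r i ≤ u i) ∧ ∑ i ∈ S, r i = T := by
  classical
  induction S using Finset.induction_on generalizing T with
  | empty => exact ⟨l, by simp, by simp at hu ⊢; omega⟩
  | insert i S hi ih =>
    rw [sum_insert hi] at hl hu
    have hluS := sum_le_sum fun j hj => hlu j (mem_insert_of_mem hj)
    have hlui := hlu i (mem_insert_self i S)
    set x := min (u i) (T - ∑ j ∈ S, l j)
    obtain ⟨r, hr, hsum⟩ := ih (fun j hj => hlu j (mem_insert_of_mem hj)) (T := T - x)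
      (by omega) (by omega)
    refine ⟨Function.update r i x, fun j hj => ?_, ?_⟩
    · rcases eq_or_ne j i with rfl | hji
      · simp only [Function.update_self]; omega
      · simpa [hji] using hr j ((mem_insert.1 hj).resolve_left hji)
    · rw [sum_insert hi, sum_update_of_notMem hi, Function.update_self, hsum]; omega

theorem card_filter_Ico_mod_eq_le_one {m x y : ℕ} (hxy : y ≤ x + m) (j : ℕ) :
    #{k ∈ Ico x y | k % m = j} ≤ 1 := by
  refine card_le_one.2 fun k₁ h₁ k₂ h₂ => ?_
  simp only [mem_filter, mem_Ico] at h₁ h₂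
  wlog h : k₁ ≤ k₂ generalizing k₁ k₂
  · exact (this k₂ k₁ h₂ h₁ (by omega)).symm
  have hdvd : m ∣ k₂ - k₁ :=
    Nat.dvd_of_mod_eq_zero (Nat.sub_mod_eq_zero_of_mod_eq (h₂.2.trans h₁.2.symm))
  have := Nat.eq_zero_of_dvd_of_lt hdvd (by omega)
  omega

theorem sum_range_card_filter_Ico_mod_eq {m x y : ℕ} (hxy : y ≤ x + m) :
    ∑ j ∈ range m, #{k ∈ Ico x y | k % m = j} = y - x := by
  rcases Nat.eq_zero_or_pos m with rfl | hm
  · simp; omega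
  · rw [← card_eq_sum_card_fiberwise fun k _ => mem_range.2 (Nat.mod_lt k hm), Nat.card_Ico]

theorem card_filter_range_mul_mod_eq {m j : ℕ} (hj : j < m) (A : ℕ) :
    #{k ∈ range (m * A) | k % m = j} = A := by
  have hm : 0 < m := by omega
  calc #{k ∈ range (m * A) | k % m = j} = #{k ∈ range (m * A) | k ≡ j [MOD m]} := by
        simp only [Nat.ModEq, Nat.mod_eq_of_lt hj]
    _ = A := by
        rw [← Nat.count_eq_card_filter_range, Nat.count_modEq_card _ hm]
        simp [hm]

theorem ite_nonempty_eq_card {α : Type*} {s : Finset α} (hs : #s ≤ 1) :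
    (if s.Nonempty then 1 else 0) = #s := by
  rcases s.eq_empty_or_nonempty with rfl | hne
  · simp
  · rw [if_pos hne]; have := hne.card_pos; omega

theorem sum_card_filter_Ico_consecutive (P : ℕ → ℕ) (hP : Monotone P) (q : ℕ → Prop)
    [DecidablePred q] (p : ℕ) :
    ∑ i ∈ range p, #{k ∈ Ico (P i) (P (i + 1)) | q k} = #{k ∈ Ico (P 0) (P p) | q k} := by
  induction p with
  | zero => simp
  | succ p ih =>
    rw [sum_range_succ, ih, ← card_union_of_disjoint
      (disjoint_filter_filter (Ico_disjoint_Ico_consecutive _ _ _)), ← filter_union,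
      Ico_union_Ico_eq_Ico (hP p.zero_le) (hP p.le_succ)]

/- Row `i` takes the columns `k % m` for `k` in the block `[r 0 + ⋯ + r (i - 1), r 0 + ⋯ + r i)`.
A block of length at most `m` meets each residue at most once, and the blocks tile `[0, m * A)`,
in which every residue occurs exactly `A` times. -/
theorem exists_boolMatrix_rowSums_colSums_const {p m A : ℕ} (r : ℕ → ℕ)
    (hr : ∀ i < p, r i ≤ m) (hsum : ∑ i ∈ range p, r i = m * A) :
    ∃ M : Fin p → Fin m → Bool, (∀ i, (∑ j, if M i j then 1 else 0) = r i) ∧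
      ∀ j, (∑ i, if M i j then 1 else 0) = A := by
  set P : ℕ → ℕ := fun i => ∑ i' ∈ range i, r i'
  have hP : ∀ i, P (i + 1) = P i + r i := fun i => sum_range_succ r i
  have hPmono : Monotone P := monotone_nat_of_le_succ fun i => by rw [hP]; omega
  have hblock : ∀ i < p, P (i + 1) ≤ P i + m := fun i hi => by rw [hP]; have := hr i hi; omega
  let block (i j : ℕ) : Finset ℕ := {k ∈ Ico (P i) (P (i + 1)) | k % m = j}
  have hind : ∀ i < p, ∀ j, (if (block i j).Nonempty then 1 else 0) = #(block i j) :=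
    fun i hi j => ite_nonempty_eq_card (card_filter_Ico_mod_eq_le_one (hblock i hi) j)
  refine ⟨fun i j => decide (block i j).Nonempty, fun i => ?_, fun j => ?_⟩
  · simp only [decide_eq_true_eq]
    rw [Fin.sum_univ_eq_sum_range (fun j => if (block i j).Nonempty then 1 else 0),
      sum_congr rfl fun j _ => hind i i.2 j, sum_range_card_filter_Ico_mod_eq (hblock i i.2), hP]
    omega
  · simp only [decide_eq_true_eq]
    rw [Fin.sum_univ_eq_sum_range (fun i => if (block i j).Nonempty then 1 else 0),
      sum_congr rfl fun i hi => hind i (mem_range.1 hi) j,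
      sum_card_filter_Ico_consecutive P hPmono, ← card_filter_range_mul_mod_eq j.2 A, ← hsum,
      range_eq_Ico]
    rfl

theorem sum_range_add_ite_lt (s t x y : ℕ) :
    ∑ i ∈ range (s + t), (if i < s then x else y) = s * x + t * y := by
  rw [sum_range_add, sum_congr rfl fun i hi => if_pos (mem_range.1 hi),
    sum_congr rfl fun i _ => if_neg (by omega)]
  simp

theorem sum_rowSums_le_sum_min_card_colSums {ι κ : Type*} [Fintype ι] [Fintype κ]
    (M : ι → κ → Bool) (S : Finset ι) :
    ∑ i ∈ S, ∑ j, (if M i j then 1 else 0) ≤ ∑ j, min #S (∑ i, if M i j then 1 else 0) := by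
  rw [sum_comm]
  refine sum_le_sum fun j _ => le_min ?_ (sum_le_sum_of_subset (subset_univ S))
  calc ∑ i ∈ S, (if M i j then 1 else 0) ≤ ∑ i ∈ S, 1 := sum_le_sum fun i _ => by split <;> omega
    _ = #S := (card_eq_sum_ones S).symm

section TwoValued

variable {s t a b : ℕ}

theorem sum_range_ite_sub_le (hba : b ≤ a) (ha : a ≤ s + t) :
    ∑ k ∈ range (s + t), ((if k < s then a else b) - t) ≤ s * a := by
  rw [sum_congr rfl fun k _ => apply_ite (· - t) _ _ _, sum_range_add_ite_lt]
  rcases le_or_gt t a with hta | hat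
  · obtain ⟨c, rfl⟩ := Nat.exists_eq_add_of_le hta
    have : t * (b - t) ≤ t * s := Nat.mul_le_mul_left t (by omega)
    rw [Nat.add_sub_cancel_left]
    nlinarith
  · simp [Nat.sub_eq_zero_of_le hat.le, Nat.sub_eq_zero_of_le (hba.trans hat.le)]

theorem le_sum_range_min_ite (ha : a ≤ s + t) (h : s * a ≤ s * s + t * b) :
    s * a ≤ ∑ k ∈ range (s + t), min s (if k < s then a else b) := by
  rw [sum_congr rfl fun k _ => apply_ite (min s) _ _ _, sum_range_add_ite_lt]
  rcases le_total a s with has | hsa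
  · rw [min_eq_right has]; omega
  rw [min_eq_left hsa]
  rcases le_total b s with hbs | hsb
  · rwa [min_eq_right hbs]
  · rw [min_eq_left hsb]; nlinarith

theorem le_of_bipartiteGraphic
    (h : BipartiteGraphic fun i : Fin (s + t) => if (i : ℕ) < s then a else b) :
    s * a ≤ s * s + t * b := by
  obtain ⟨M, e, hrow, hcol⟩ := h
  calc s * a = ∑ i ∈ univ.map (Fin.castAddEmb t), ∑ j, if M i j then 1 else 0 := by
        simp [hrow]
    _ ≤ ∑ j, min s (∑ i, if M i j then 1 else 0) := by
        simpa using sum_rowSums_le_sum_min_card_colSums M (univ.map (Fin.castAddEmb t))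
    _ = ∑ j : Fin (s + t), min s (if (j : ℕ) < s then a else b) := by
        simp only [hcol]
        exact Equiv.sum_comp e fun j => min s (if (j : ℕ) < s then a else b)
    _ = s * min s a + t * min s b := by
        rw [Fin.sum_univ_eq_sum_range (fun j => min s (if j < s then a else b)),
          ← sum_range_add_ite_lt]
        exact sum_congr rfl fun j _ => apply_ite _ _ _ _
    _ ≤ s * s + t * b := by gcongr <;> omega

theorem bipartiteGraphic_of_le (hba : b ≤ a) (ha : a ≤ s + t)
    (h : s * a ≤ s * s + t * b) :
    BipartiteGraphic fun i : Fin (s + t) => if (i : ℕ) < s then a else b := by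
  set d : ℕ → ℕ := fun k => if k < s then a else b
  obtain ⟨r, hr, hsum⟩ := exists_le_le_sum_eq (range (s + t)) (fun k => d k - t)
    (fun k => min s (d k)) (fun k _ => by simp only [d]; split <;> omega)
    (sum_range_ite_sub_le hba ha) (le_sum_range_min_ite ha h)
  have hr' : ∀ k < s + t, d k - t ≤ r k ∧ r k ≤ min s (d k) := fun k hk => hr k (mem_range.2 hk)
  have hsum' : ∑ k ∈ range (s + t), (d k - r k) = t * b := by
    have hd : ∑ k ∈ range (s + t), d k = s * a + t * b := sum_range_add_ite_lt s t a b
    have := sum_tsub_distrib (range (s + t)) fun k hk => (hr k hk).2.trans (min_le_right _ _)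
    omega
  obtain ⟨M₁, hrow₁, hcol₁⟩ := exists_boolMatrix_rowSums_colSums_const r
    (fun k hk => (hr' k hk).2.trans (min_le_left _ _)) hsum
  obtain ⟨M₂, hrow₂, hcol₂⟩ := exists_boolMatrix_rowSums_colSums_const (fun k => d k - r k)
    (fun k hk => by have := hr' k hk; omega) hsum'
  refine ⟨fun i => Fin.append (M₁ i) (M₂ i), Equiv.refl _, fun i => ?_,
    Fin.addCases (fun j => ?_) (fun j => ?_)⟩
  · have := hr' i i.2
    rw [Fin.sum_univ_add]
    simp only [Fin.append_left, Fin.append_right, hrow₁, hrow₂]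
    change r i + (d i - r i) = d i
    omega
  · simp [Fin.append_left, hcol₁]
  · simp [Fin.append_right, hcol₂]

end TwoValued

theorem stmt_3_general (a b n s : ℕ) (hba : b < a) (han : a ≤ n) (hsn : s ≤ n) :
    BipartiteGraphic (fun i : Fin n => if (i : ℕ) < s then a else b) ↔
      (0 : ℤ) ≤ (s : ℤ) ^ 2 - (a + b) * s + n * b := by
  obtain ⟨t, rfl⟩ := Nat.exists_eq_add_of_le hsn
  have hcond : (0 : ℤ) ≤ (s : ℤ) ^ 2 - (a + b) * s + ((s + t : ℕ) : ℤ) * b ↔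
      s * a ≤ s * s + t * b := by
    zify; constructor <;> intro h <;> linarith
  rw [hcond]
  exact ⟨le_of_bipartiteGraphic, bipartiteGraphic_of_le hba.le han⟩

theorem stmt_3 (a b n s : ℕ) (hb : 0 < b) (hba : b < a) (han : a ≤ n) (hs : 0 < s)
    (hsn : s ≤ n) :
    BipartiteGraphic (fun i : Fin n => if (i : ℕ) < s then a else b) ↔
      (0 : ℤ) ≤ (s : ℤ) ^ 2 - (a + b) * s + n * b :=
  stmt_3_general a b n s hba han hsn
end

section
/- If a ≡ b (mod 2), b < a ≤ n, and 4nb < (a+b)², then the sequence consisting of (a+b)/2 copies of a and n − (a+b)/2 copies of b is not bipartite graphic. -/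
/-!
The first `k = (a + b) / 2` rows carry `k * a` edges, while column `j` can receive at most
`min k (d j)` of them (the Gale–Ryser bound), so `k * a ≤ k * k + (n - k) * b`. Since
`2 * k = a + b`, this says `k * k ≤ n * b`, that is `(a + b) ^ 2 ≤ 4 * n * b`.
-/

open Finset

theorem sum_rowSum_le_sum_min_colSum {α β : Type*} [Fintype α] [Fintype β]
    (M : α → β → Bool) (R : Finset α) :
    ∑ i ∈ R, ∑ j, (if M i j then 1 else 0) ≤ ∑ j, min #R (∑ i, if M i j then 1 else 0) := by
  rw [sum_comm]
  gcongr with j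
  refine le_min ?_ (sum_le_sum_of_subset R.subset_univ)
  calc ∑ i ∈ R, (if M i j then 1 else 0) ≤ ∑ _i ∈ R, 1 := sum_le_sum fun i _ => by split <;> omega
    _ = #R := (card_eq_sum_ones R).symm

theorem BipartiteGraphic.sum_le_sum_min {n : ℕ} {d : Fin n → ℕ} (hd : BipartiteGraphic d)
    (R : Finset (Fin n)) : ∑ i ∈ R, d i ≤ ∑ j, min #R (d j) := by
  obtain ⟨M, e, hrow, hcol⟩ := hd
  calc ∑ i ∈ R, d i = ∑ i ∈ R, ∑ j, (if M i j then 1 else 0) := by simp only [hrow]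
    _ ≤ ∑ j, min #R (∑ i, if M i j then 1 else 0) := sum_rowSum_le_sum_min_colSum M R
    _ = ∑ j, min #R (d (e j)) := by simp only [hcol]
    _ = ∑ j, min #R (d j) := Equiv.sum_comp e fun j => min #R (d j)

theorem sum_ite_val_lt {n k : ℕ} (hkn : k ≤ n) (x y : ℕ) :
    ∑ i : Fin n, (if (i : ℕ) < k then x else y) = k * x + (n - k) * y := by
  rw [sum_ite, sum_const, sum_const, filter_not, card_sdiff_of_subset (filter_subset _ _),
    Fin.card_filter_val_lt, card_univ, Fintype.card_fin, min_eq_right hkn, smul_eq_mul,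
    smul_eq_mul]

theorem BipartiteGraphic.mul_le_of_step {n k a b : ℕ} (hkn : k ≤ n) (hbk : b ≤ k) (hka : k ≤ a)
    (hd : BipartiteGraphic (fun i : Fin n => if (i : ℕ) < k then a else b)) :
    k * a ≤ k * k + (n - k) * b := by
  have hR : #{i : Fin n | (i : ℕ) < k} = k := by rw [Fin.card_filter_val_lt, min_eq_right hkn]
  have key := hd.sum_le_sum_min {i | (i : ℕ) < k}
  rw [sum_congr rfl fun i hi => if_pos (mem_filter.1 hi).2, sum_const, hR, smul_eq_mul] at key
  simpa only [apply_ite (min k), min_eq_left hka, min_eq_right hbk, sum_ite_val_lt hkn] using key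

theorem stmt_4_general (a b n : ℕ) (hba : b < a) (han : a ≤ n)
    (hpar : a % 2 = b % 2) (h : 4 * n * b < (a + b) ^ 2) :
    ¬ BipartiteGraphic (fun i : Fin n => if (i : ℕ) < (a + b) / 2 then a else b) := by
  set k := (a + b) / 2
  have hk : 2 * k = a + b := by omega
  intro hd
  have key := hd.mul_le_of_step (by omega) (by omega) (by omega)
  have hnb : (n - k) * b + k * b = n * b := by rw [← add_mul, Nat.sub_add_cancel (by omega)]
  have hkk : k * k ≤ n * b := by nlinarith
  have : (a + b) ^ 2 ≤ 4 * n * b := by rw [← hk]; nlinarith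
  omega

theorem stmt_4 (a b n : ℕ) (hb : 0 < b) (hba : b < a) (han : a ≤ n)
    (hpar : a % 2 = b % 2) (h : 4 * n * b < (a + b) ^ 2) :
    ¬ BipartiteGraphic (fun i : Fin n => if (i : ℕ) < (a + b) / 2 then a else b) :=
  stmt_4_general a b n hba han hpar h
end

section
/- Let d = (d₁,…,dₙ) be a decreasing sequence of positive integers and for each integer j let n_j denote the number of elements of d equal to j. Then d is bipartite graphic if and only if for every strong index k (an index k with d_k ≥ k) one has Σ_{i=1}^{k}(d_i + i·n_{k−i}) ≤ kn. -/
/-!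
By the Gale–Ryser theorem, `d` is bipartite graphic iff `∑_{j ∈ S} d_j ≤ ∑_t min (d_t, |S|)` for
every set `S` of indices, and for a decreasing sequence the worst `S` of size `k` is `{1, …, k}`.
Sufficiency in Gale–Ryser goes by induction on the total degree: joining one column of degree `c`
to `c` rows of largest degree preserves the condition. Since `d` is positive, `∑ i · n_{k-i}` counts
`∑_t (k - min (d_t, k))`, so the stated inequality at `k` is the Gale–Ryser inequality at `k`.
Finally, if `d_k < k`, the last index `p` with `d_p > k` is strong and `p < k`, and the inequality
at `p` implies the one at `k`.
-/

open Finset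

variable {α β : Type*}

def HasMargins [Fintype α] [Fintype β] (M : α → β → Bool) (r : α → ℕ) (c : β → ℕ) : Prop :=
  (∀ i, ∑ j, (if M i j then 1 else 0) = r i) ∧ ∀ j, ∑ i, (if M i j then 1 else 0) = c j

theorem HasMargins.sum_le_sum_min [Fintype α] [Fintype β] {M : α → β → Bool} {r : α → ℕ}
    {c : β → ℕ} (h : HasMargins M r c) (S : Finset β) : ∑ j ∈ S, c j ≤ ∑ i, min (r i) #S := by
  calc ∑ j ∈ S, c j = ∑ i, ∑ j ∈ S, (if M i j then 1 else 0) := by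
        simp only [← h.2]; exact sum_comm
    _ ≤ ∑ i, min (r i) #S := by
        refine sum_le_sum fun i _ => le_min ?_ ?_
        · exact h.1 i ▸ sum_le_sum_of_subset (subset_univ S)
        · rw [sum_boole]; exact card_filter_le S _

theorem HasMargins.exists_update_column [Fintype α] [Fintype β] [DecidableEq α] [DecidableEq β]
    {M : α → β → Bool} {r : α → ℕ} {c : β → ℕ} (h : HasMargins M r c) {j₀ : β} (hj₀ : c j₀ = 0)
    (T : Finset α) :
    ∃ M' : α → β → Bool,
      HasMargins M' (fun i => r i + if i ∈ T then 1 else 0) (Function.update c j₀ #T) := by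
  have hM : ∀ i, M i j₀ = false := fun i => by
    simpa using sum_eq_zero_iff.1 ((h.2 j₀).trans hj₀) i (mem_univ i)
  refine ⟨fun i => Function.update (M i) j₀ (decide (i ∈ T)), fun i => ?_, fun j => ?_⟩
  · simp only [Function.apply_update (fun _ (b : Bool) => if b then (1 : ℕ) else 0),
      sum_update_of_mem (mem_univ j₀), ← h.1 i,
      sum_eq_add_sum_sdiff_singleton_of_mem (mem_univ j₀) (fun j => if M i j then 1 else 0), hM]
    simp [add_comm]
  · rcases eq_or_ne j j₀ with rfl | hj
    · simp
    · simpa [Function.update_of_ne hj] using h.2 j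

theorem exists_top_finset [Fintype α] [DecidableEq α] (r : α → ℕ) {t : ℕ}
    (ht : t ≤ #{i | 0 < r i}) :
    ∃ T : Finset α, #T = t ∧ (∀ i ∈ T, 0 < r i) ∧ ∀ i ∈ T, ∀ i' ∉ T, r i' ≤ r i := by
  induction t with
  | zero => exact ⟨∅, by simp⟩
  | succ t ih =>
    obtain ⟨T, hT, hpos, htop⟩ := ih (by omega)
    obtain ⟨j, hj, hjT⟩ : ∃ j, 0 < r j ∧ j ∉ T := by
      by_contra! hcon
      have : ({i | 0 < r i} : Finset α) ⊆ T := fun i hi => hcon i (mem_filter.1 hi).2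
      have := card_le_card this
      omega
    obtain ⟨m, hm, hmax⟩ := exists_max_image Tᶜ r ⟨j, by simpa using hjT⟩
    have hmT : m ∉ T := by simpa using hm
    refine ⟨insert m T, by rw [card_insert_of_notMem hmT, hT], ?_, ?_⟩
    · simp only [mem_insert, forall_eq_or_imp]
      exact ⟨hj.trans_le (hmax j (by simpa using hjT)), hpos⟩
    · simp only [mem_insert, forall_eq_or_imp, not_or]
      exact ⟨fun i' hi' => hmax i' (by simpa using hi'.2),
        fun i hi i' hi' => htop i hi i' hi'.2⟩

theorem sum_le_sum_min_tsub_of_notMem [Fintype α] [DecidableEq α] [DecidableEq β] {r : α → ℕ}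
    {c : β → ℕ} (hcond : ∀ S : Finset β, ∑ j ∈ S, c j ≤ ∑ i, min (r i) #S) {j₀ : β} {T : Finset α}
    (hT : #T = c j₀) (hpos : ∀ i ∈ T, 0 < r i) (htop : ∀ i ∈ T, ∀ i' ∉ T, r i' ≤ r i)
    {S : Finset β} (hS : j₀ ∉ S) :
    ∑ j ∈ S, c j ≤ ∑ i, min (r i - if i ∈ T then 1 else 0) #S := by
  -- Either decrementing the rows of `T` changes no `min (r i) #S`, or every row outside `T` is
  -- at most `#S` long and the condition for `insert j₀ S` pays for the decrement.
  by_cases hlong : ∀ i ∈ T, #S < r i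
  · refine (hcond S).trans_eq (sum_congr rfl fun i _ => ?_)
    split_ifs with hi
    · have := hlong i hi; omega
    · simp
  push Not at hlong
  obtain ⟨i₀, hi₀T, hi₀⟩ := hlong
  have hshort : ∀ i ∉ T, r i ≤ #S := fun i hi => (htop i₀ hi₀T i hi).trans hi₀
  have hins := hcond (insert j₀ S)
  rw [sum_insert hS, card_insert_of_notMem hS] at hins
  have hrow_bound : ∑ i, min (r i) (#S + 1)
      ≤ ∑ i, (min (r i - if i ∈ T then 1 else 0) #S + if i ∈ T then 1 else 0) := by
    refine sum_le_sum fun i _ => ?_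
    split_ifs with hi
    · have := hpos i hi; omega
    · have := hshort i hi; omega
  rw [sum_add_distrib, sum_boole, Nat.cast_id, filter_mem_eq_inter, univ_inter, hT] at hrow_bound
  omega

theorem sum_update_zero_le_sum_min_tsub [Fintype α] [DecidableEq α] [DecidableEq β] {r : α → ℕ}
    {c : β → ℕ} (hcond : ∀ S : Finset β, ∑ j ∈ S, c j ≤ ∑ i, min (r i) #S) {j₀ : β}
    {T : Finset α} (hT : #T = c j₀) (hpos : ∀ i ∈ T, 0 < r i)
    (htop : ∀ i ∈ T, ∀ i' ∉ T, r i' ≤ r i) (S : Finset β) :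
    ∑ j ∈ S, Function.update c j₀ 0 j ≤ ∑ i, min (r i - if i ∈ T then 1 else 0) #S := by
  have herase : ∑ j ∈ S, Function.update c j₀ 0 j = ∑ j ∈ S.erase j₀, c j := by
    by_cases hj₀ : j₀ ∈ S
    · rw [sum_update_of_mem hj₀, sdiff_singleton_eq_erase, zero_add]
    · rw [sum_update_of_notMem hj₀, erase_eq_of_notMem hj₀]
  rw [herase]
  refine (sum_le_sum_min_tsub_of_notMem hcond hT hpos htop (notMem_erase j₀ S)).trans ?_
  gcongr
  exact erase_subset j₀ S

theorem exists_hasMargins_of_forall_sum_le_sum_min [Fintype α] [Fintype β] [DecidableEq α]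
    [DecidableEq β] {r : α → ℕ} {c : β → ℕ} (hsum : ∑ i, r i = ∑ j, c j)
    (hcond : ∀ S : Finset β, ∑ j ∈ S, c j ≤ ∑ i, min (r i) #S) :
    ∃ M, HasMargins M r c := by
  induction hN : ∑ j, c j using Nat.strong_induction_on generalizing r c with
  | _ N ih =>
  by_cases hzero : ∀ j, c j = 0
  · refine ⟨fun _ _ => false, fun i => ?_, fun j => by simp [hzero]⟩
    have hr : ∑ i, r i = 0 := by simp [hsum, hzero]
    simpa using (sum_eq_zero_iff.1 hr i (mem_univ i)).symm
  push Not at hzero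
  obtain ⟨j₀, hj₀⟩ := hzero
  have hfit : c j₀ ≤ #{i | 0 < r i} := by
    have hmin : ∑ i, min (r i) 1 = #{i | 0 < r i} := by
      rw [card_filter]
      exact sum_congr rfl fun i _ => by split <;> omega
    simpa [hmin] using hcond {j₀}
  obtain ⟨T, hT, hpos, htop⟩ := exists_top_finset r hfit
  set r' := fun i => r i - if i ∈ T then 1 else 0
  have hr' : (fun i => r' i + if i ∈ T then 1 else 0) = r := by
    funext i
    split_ifs with hi
    · have := hpos i hi; simp only [r', if_pos hi]; omega
    · simp [r', hi]
  have hsum_r : ∑ i, r i = ∑ i, r' i + c j₀ := by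
    conv_lhs => rw [← hr']
    rw [sum_add_distrib, sum_boole, Nat.cast_id, filter_mem_eq_inter, univ_inter, hT]
  have hsum_c : ∑ j, c j = ∑ j, Function.update c j₀ 0 j + c j₀ := by
    rw [sum_update_of_mem (mem_univ j₀), sum_eq_add_sum_sdiff_singleton_of_mem (mem_univ j₀)]
    omega
  obtain ⟨M', hM'⟩ := ih _ (by omega) (r := r') (by omega)
    (sum_update_zero_le_sum_min_tsub hcond hT hpos htop) rfl
  obtain ⟨M, hM⟩ := hM'.exists_update_column (Function.update_self j₀ 0 c) T
  rw [hr', Function.update_idem, hT, Function.update_eq_self] at hM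
  exact ⟨M, hM⟩

theorem bipartiteGraphic_iff_forall_sum_le_sum_min {n : ℕ} (D : Fin n → ℕ) :
    BipartiteGraphic D ↔ ∀ S : Finset (Fin n), ∑ j ∈ S, D j ≤ ∑ i, min (D i) #S := by
  constructor
  · rintro ⟨M, e, hrow, hcol⟩ S
    simpa [sum_map] using
      HasMargins.sum_le_sum_min (c := fun j => D (e j)) ⟨hrow, hcol⟩ (S.map e.symm.toEmbedding)
  · intro h
    obtain ⟨M, hrow, hcol⟩ := exists_hasMargins_of_forall_sum_le_sum_min rfl h
    exact ⟨M, 1, hrow, hcol⟩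

theorem map_univ_fin_add_one_eq_Icc (n : ℕ) :
    (univ : Finset (Fin n)).map (Fin.valEmbedding.trans (addRightEmbedding 1)) = Icc 1 n := by
  ext t
  simp only [mem_map, mem_univ, true_and, Function.Embedding.trans_apply,
    Fin.valEmbedding_apply, addRightEmbedding_apply, mem_Icc]
  constructor
  · rintro ⟨i, rfl⟩
    omega
  · intro ht
    exact ⟨⟨t - 1, by omega⟩, by simp only; omega⟩

theorem forall_fin_sum_le_sum_min_iff (n : ℕ) (d : ℕ → ℕ) :
    (∀ S : Finset (Fin n), ∑ j ∈ S, d ((j : ℕ) + 1) ≤ ∑ i : Fin n, min (d ((i : ℕ) + 1)) #S) ↔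
      ∀ S ⊆ Icc 1 n, ∑ j ∈ S, d j ≤ ∑ t ∈ Icc 1 n, min (d t) #S := by
  rw [← map_univ_fin_add_one_eq_Icc]
  constructor
  · intro h S hS
    obtain ⟨u, -, rfl⟩ := subset_map_iff.1 hS
    simpa [sum_map] using h u
  · intro h S
    simpa [sum_map] using h _ (map_subset_map.2 (subset_univ S))

theorem sum_le_sum_Icc_card {n : ℕ} {d : ℕ → ℕ} (hd : AntitoneOn d (Set.Icc 1 n))
    {S : Finset ℕ} (hS : S ⊆ Icc 1 n) : ∑ j ∈ S, d j ≤ ∑ i ∈ Icc 1 #S, d i := by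
  induction S using Finset.induction_on_max with
  | empty => simp
  | insert a s hlt ih =>
    have has : a ∉ s := fun h => lt_irrefl a (hlt a h)
    have hs : s ⊆ Icc 1 n := (subset_insert a s).trans hS
    have ha := mem_Icc.1 (hS (mem_insert_self a s))
    have hcard : #s + 1 ≤ a := by
      have : s ⊆ Ico 1 a := fun x hx => mem_Ico.2 ⟨(mem_Icc.1 (hs hx)).1, hlt x hx⟩
      have := card_le_card this
      simp only [Nat.card_Ico] at this
      omega
    rw [sum_insert has, card_insert_of_notMem has, sum_Icc_succ_top (by omega), add_comm]
    exact add_le_add (ih hs) (hd ⟨by omega, by omega⟩ ⟨ha.1, ha.2⟩ hcard)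

theorem forall_subset_sum_le_sum_min_iff {n : ℕ} {d : ℕ → ℕ} (hd : AntitoneOn d (Set.Icc 1 n)) :
    (∀ S ⊆ Icc 1 n, ∑ j ∈ S, d j ≤ ∑ t ∈ Icc 1 n, min (d t) #S) ↔
      ∀ k ≤ n, ∑ i ∈ Icc 1 k, d i ≤ ∑ t ∈ Icc 1 n, min (d t) k := by
  constructor
  · intro h k hk
    simpa using h (Icc 1 k) (Icc_subset_Icc_right hk)
  · intro h S hS
    refine (sum_le_sum_Icc_card hd hS).trans (h _ ?_)
    simpa using card_le_card hS

theorem sum_Icc_one_add_sum_Ioc {M : Type*} [AddCommMonoid M] {p k : ℕ} (hpk : p ≤ k)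
    (g : ℕ → M) : ∑ t ∈ Icc 1 p, g t + ∑ t ∈ Ioc p k, g t = ∑ t ∈ Icc 1 k, g t := by
  have hIoc : ∀ m : ℕ, Icc 1 m = Ioc 0 m := Icc_add_one_left_eq_Ioc 0
  rw [hIoc, hIoc]
  exact sum_Ioc_consecutive g (Nat.zero_le p) hpk

theorem sum_min_add_sum_Ioc_le {n p k : ℕ} {d : ℕ → ℕ} (hpk : p ≤ k) (hkn : k ≤ n)
    (hlarge : ∀ t ∈ Icc 1 p, k ≤ d t) (hsmall : ∀ t ∈ Ioc p k, d t ≤ k) :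
    ∑ t ∈ Icc 1 n, min (d t) p + ∑ t ∈ Ioc p k, d t ≤ ∑ t ∈ Icc 1 n, min (d t) k := by
  have hsplit : ∀ g : ℕ → ℕ,
      ∑ t ∈ Icc 1 n, g t = ∑ t ∈ Icc 1 p, g t + ∑ t ∈ Ioc p k, g t + ∑ t ∈ Ioc k n, g t := by
    intro g
    rw [sum_Icc_one_add_sum_Ioc hpk, sum_Icc_one_add_sum_Ioc hkn]
  have hhead_p : ∑ t ∈ Icc 1 p, min (d t) p = p * p := by
    rw [sum_congr rfl fun t ht => min_eq_right ((hlarge t ht).trans' hpk)]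
    simp
  have hhead_k : ∑ t ∈ Icc 1 p, min (d t) k = p * k := by
    rw [sum_congr rfl fun t ht => min_eq_right (hlarge t ht)]
    simp
  have hmid_p : ∑ t ∈ Ioc p k, min (d t) p ≤ (k - p) * p := by
    simpa using sum_le_card_nsmul (Ioc p k) (fun t => min (d t) p) p fun t _ => min_le_right _ _
  have hmid_k : ∑ t ∈ Ioc p k, min (d t) k = ∑ t ∈ Ioc p k, d t :=
    sum_congr rfl fun t ht => min_eq_left (hsmall t ht)
  have htail : ∑ t ∈ Ioc k n, min (d t) p ≤ ∑ t ∈ Ioc k n, min (d t) k := by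
    gcongr
  have hpk_mul : p * p + (k - p) * p = p * k := by
    rw [← add_mul, Nat.add_sub_cancel' hpk, mul_comm]
  rw [hsplit, hsplit]
  omega

theorem forall_sum_le_of_forall_strong {n : ℕ} {d : ℕ → ℕ} (hd : AntitoneOn d (Set.Icc 1 n))
    (hstrong : ∀ k, 1 ≤ k → k ≤ n → k ≤ d k →
      ∑ i ∈ Icc 1 k, d i ≤ ∑ t ∈ Icc 1 n, min (d t) k) :
    ∀ k ≤ n, ∑ i ∈ Icc 1 k, d i ≤ ∑ t ∈ Icc 1 n, min (d t) k := by
  intro k hkn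
  rcases Nat.eq_zero_or_pos k with rfl | hk
  · simp
  by_cases hkd : k ≤ d k
  · exact hstrong k hk hkn hkd
  obtain ⟨p, hp⟩ : ∃ p, Nat.findGreatest (fun j => k < d j) k = p := ⟨_, rfl⟩
  have hdp : p ≠ 0 → k < d p := Nat.findGreatest_of_ne_zero hp
  have hpk : p < k := by
    refine (hp ▸ Nat.findGreatest_le k).lt_of_ne ?_
    rintro rfl
    exact hkd (hdp (by omega)).le
  have hlarge : ∀ t ∈ Icc 1 p, k < d t := by
    intro t ht
    have ht := mem_Icc.1 ht
    exact (hdp (by omega)).trans_le (hd ⟨ht.1, by omega⟩ ⟨by omega, by omega⟩ ht.2)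
  have hsmall : ∀ t ∈ Ioc p k, d t ≤ k := by
    intro t ht
    have ht := mem_Ioc.1 ht
    exact not_lt.1 (Nat.findGreatest_is_greatest (P := fun j => k < d j) (hp ▸ ht.1) ht.2)
  have hhead : ∑ i ∈ Icc 1 p, d i ≤ ∑ t ∈ Icc 1 n, min (d t) p := by
    rcases Nat.eq_zero_or_pos p with hp0 | hp0
    · simp [hp0]
    · exact hstrong p hp0 (by omega) (hpk.le.trans (hlarge p (mem_Icc.2 ⟨hp0, le_rfl⟩)).le)
  calc ∑ i ∈ Icc 1 k, d i = ∑ i ∈ Icc 1 p, d i + ∑ i ∈ Ioc p k, d i :=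
        (sum_Icc_one_add_sum_Ioc hpk.le d).symm
    _ ≤ ∑ t ∈ Icc 1 n, min (d t) p + ∑ i ∈ Ioc p k, d i := by gcongr
    _ ≤ ∑ t ∈ Icc 1 n, min (d t) k :=
        sum_min_add_sum_Ioc_le hpk.le hkn (fun t ht => (hlarge t ht).le) hsmall

theorem sum_Icc_ite_eq_tsub_min {m : ℕ} (hm : 0 < m) (k : ℕ) :
    ∑ i ∈ Icc 1 k, (if m = k - i then i else 0) = k - min m k := by
  have hcond : ∀ i ∈ Icc 1 k, (m = k - i ↔ i = k - min m k) := by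
    intro i hi
    have := mem_Icc.1 hi
    omega
  rw [sum_congr rfl fun i hi => if_congr (hcond i hi) rfl rfl, sum_ite_eq']
  split_ifs with h
  · rfl
  · simp only [mem_Icc, not_and_or] at h
    omega

theorem sum_mul_card_filter_eq {n : ℕ} {d : ℕ → ℕ} (hpos : ∀ t ∈ Icc 1 n, 0 < d t) (k : ℕ) :
    ∑ i ∈ Icc 1 k, i * #{t ∈ Icc 1 n | d t = k - i} = ∑ t ∈ Icc 1 n, (k - min (d t) k) := by
  simp only [card_filter, mul_sum, mul_boole]
  rw [sum_comm]
  exact sum_congr rfl fun t ht => sum_Icc_ite_eq_tsub_min (hpos t ht) k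

theorem sum_add_mul_card_le_iff {n : ℕ} {d : ℕ → ℕ} (hpos : ∀ t ∈ Icc 1 n, 0 < d t)
    (k : ℕ) :
    ∑ i ∈ Icc 1 k, (d i + i * #{t ∈ Icc 1 n | d t = k - i}) ≤ k * n ↔
      ∑ i ∈ Icc 1 k, d i ≤ ∑ t ∈ Icc 1 n, min (d t) k := by
  have hkn : ∑ t ∈ Icc 1 n, min (d t) k + ∑ t ∈ Icc 1 n, (k - min (d t) k) = k * n := by
    rw [← sum_add_distrib, sum_congr rfl fun t _ => Nat.add_sub_of_le (min_le_right (d t) k)]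
    simp [mul_comm]
  rw [sum_add_distrib, sum_mul_card_filter_eq hpos]
  omega

theorem stmt_6_general (n : ℕ) (d : ℕ → ℕ)
    (hdec : ∀ i j, 1 ≤ i → i ≤ j → j ≤ n → d j ≤ d i)
    (hpos : ∀ i, 1 ≤ i → i ≤ n → 0 < d i) :
    BipartiteGraphic (fun i : Fin n => d ((i : ℕ) + 1)) ↔
      ∀ k, 1 ≤ k → k ≤ n → k ≤ d k →
        ∑ i ∈ Finset.Icc 1 k,
          (d i + i * ((Finset.Icc 1 n).filter (fun t => d t = k - i)).card) ≤ k * n := by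
  have hd : AntitoneOn d (Set.Icc 1 n) := fun i hi j hj hij => hdec i j hi.1 hij hj.2
  have hpos' : ∀ t ∈ Icc 1 n, 0 < d t := fun t ht => hpos t (mem_Icc.1 ht).1 (mem_Icc.1 ht).2
  rw [bipartiteGraphic_iff_forall_sum_le_sum_min, forall_fin_sum_le_sum_min_iff,
    forall_subset_sum_le_sum_min_iff hd]
  simp only [sum_add_mul_card_le_iff hpos']
  exact ⟨fun h k _ hkn _ => h k hkn, forall_sum_le_of_forall_strong hd⟩

theorem stmt_6 (n : ℕ) (hn : 0 < n) (d : ℕ → ℕ)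
    (hdec : ∀ i j, 1 ≤ i → i ≤ j → j ≤ n → d j ≤ d i)
    (hpos : ∀ i, 1 ≤ i → i ≤ n → 0 < d i) :
    BipartiteGraphic (fun i : Fin n => d ((i : ℕ) + 1)) ↔
      ∀ k, 1 ≤ k → k ≤ n → k ≤ d k →
        ∑ i ∈ Finset.Icc 1 k,
          (d i + i * ((Finset.Icc 1 n).filter (fun t => d t = k - i)).card) ≤ k * n :=
  stmt_6_general n d hdec hpos
end

section
/- Let d = (d₁,…,dₙ) be a decreasing sequence of positive integers with n ≥ d₁, let n_j = #{i : d_i = j}, and F_k as above. If k, p ∈ {0,…,n} satisfy p = max{q : d_q ≥ k+1} and k = max{q : d_q ≥ p+1}, then F_k = F_p. -/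
/-!
Write `p(k)` for the last index `q` with `d_q > k`; as `d` is decreasing, `d_t > k` exactly
for `t ≤ p(k)`. Since `Σ_{i ≤ k} (k - i) n_i = Σ_t (k - min(d_t, k))`,
`F_k = Σ_t min(d_t, k) - Σ_{i ≤ k} d_i = k p(k) + Σ_{t ≤ n} d_t - Σ_{t ≤ p(k)} d_t - Σ_{t ≤ k} d_t`.
This expression is symmetric in `k` and `p(k)`, so `F_k = F_p` as soon as `p = p(k)` and `k = p(p)`.
-/

open Finset

namespace DegreeSequence

/-- `F_k` of the paper. -/
def slack (n : ℕ) (d : ℕ → ℕ) (k : ℕ) : ℤ :=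
  k * n - ∑ i ∈ Icc 1 k, (d i : ℤ) -
    ∑ i ∈ range (k + 1), ((k : ℤ) - i) * #{t ∈ Icc 1 n | d t = i}

def lastAbove (n : ℕ) (d : ℕ → ℕ) (k : ℕ) : ℕ :=
  {q ∈ Icc 1 n | k + 1 ≤ d q}.sup id

lemma Icc_one_eq_Ioc_zero (m : ℕ) : Icc 1 m = Ioc 0 m := by
  simpa using Icc_add_one_left_eq_Ioc 0 m

lemma sum_range_mul_card_filter_eq {ι : Type*} (s : Finset ι) (d : ι → ℕ) (k : ℕ) :
    ∑ i ∈ range (k + 1), ((k : ℤ) - i) * #{t ∈ s | d t = i} =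
      ∑ t ∈ s, ((k : ℤ) - min (d t : ℤ) k) := by
  have hfiber : ∀ i ∈ range (k + 1), ((k : ℤ) - i) * #{t ∈ s | d t = i} =
      ∑ t ∈ s with d t = i, ((k : ℤ) - d t) := by
    intro i _
    rw [sum_congr rfl fun t ht => by rw [(mem_filter.1 ht).2], sum_const, nsmul_eq_mul, mul_comm]
  rw [sum_congr rfl hfiber, sum_fiberwise_eq_sum_filter, sum_filter]
  refine sum_congr rfl fun t _ => ?_
  split_ifs with h
  · rw [mem_range] at h
    rw [min_eq_left (by omega)]
  · rw [mem_range] at h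
    rw [min_eq_right (by omega), sub_self]

lemma slack_eq_sum_min_sub_sum (n : ℕ) (d : ℕ → ℕ) (k : ℕ) :
    slack n d k = ∑ t ∈ Icc 1 n, min (d t : ℤ) k - ∑ i ∈ Icc 1 k, (d i : ℤ) := by
  rw [slack, sum_range_mul_card_filter_eq, sum_sub_distrib, sum_const, Nat.card_Icc,
    nsmul_eq_mul]
  push_cast
  ring

lemma lastAbove_le (n : ℕ) (d : ℕ → ℕ) (k : ℕ) : lastAbove n d k ≤ n :=
  Finset.sup_le fun _ hq => (mem_Icc.1 (mem_filter.1 hq).1).2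

lemma lt_iff_le_lastAbove {n : ℕ} {d : ℕ → ℕ} (hd : AntitoneOn d (Set.Icc 1 n)) (k : ℕ)
    {t : ℕ} (ht : t ∈ Set.Icc 1 n) : k < d t ↔ t ≤ lastAbove n d k := by
  obtain ⟨ht1, htn⟩ := ht
  rw [lastAbove, Finset.le_sup_iff (bot_eq_zero (α := ℕ) ▸ ht1)]
  constructor
  · exact fun h => ⟨t, by simp [ht1, htn, h], le_rfl⟩
  · rintro ⟨q, hq, htq⟩
    simp only [mem_filter, mem_Icc] at hq
    have : d q ≤ d t := hd ⟨ht1, htn⟩ ⟨by omega, hq.1.2⟩ htq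
    omega

lemma sum_min_eq (n : ℕ) (d : ℕ → ℕ) (hd : AntitoneOn d (Set.Icc 1 n)) (k : ℕ) :
    ∑ t ∈ Icc 1 n, min (d t : ℤ) k =
      k * lastAbove n d k + ∑ t ∈ Ioc (lastAbove n d k) n, (d t : ℤ) := by
  set p := lastAbove n d k
  have hmem : ∀ {t}, t ∈ Ioc 0 n → t ∈ Set.Icc 1 n := fun ht => by
    simp only [mem_Ioc] at ht; exact ⟨ht.1, ht.2⟩
  rw [Icc_one_eq_Ioc_zero, ← sum_Ioc_consecutive _ (Nat.zero_le p) (lastAbove_le n d k)]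
  congr 1
  · have hhigh : ∀ t ∈ Ioc 0 p, min (d t : ℤ) k = k := fun t ht => by
      have htp := mem_Ioc.1 ht
      have := (lt_iff_le_lastAbove hd k (hmem (Ioc_subset_Ioc_right (lastAbove_le n d k) ht))).2
        htp.2
      omega
    rw [sum_congr rfl hhigh, sum_const, Nat.card_Ioc, nsmul_eq_mul, mul_comm, Nat.sub_zero]
  · refine sum_congr rfl fun t ht => ?_
    have htp := mem_Ioc.1 ht
    have := (lt_iff_le_lastAbove hd k (hmem (Ioc_subset_Ioc_left (Nat.zero_le p) ht))).not.2
      (by omega)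
    omega

lemma slack_eq (n : ℕ) (d : ℕ → ℕ) (hd : AntitoneOn d (Set.Icc 1 n)) (k : ℕ) :
    slack n d k = k * lastAbove n d k + ∑ t ∈ Icc 1 n, (d t : ℤ) -
      ∑ t ∈ Icc 1 (lastAbove n d k), (d t : ℤ) - ∑ t ∈ Icc 1 k, (d t : ℤ) := by
  rw [slack_eq_sum_min_sub_sum, sum_min_eq n d hd, Icc_one_eq_Ioc_zero n,
    Icc_one_eq_Ioc_zero (lastAbove n d k),
    ← sum_Ioc_consecutive _ (Nat.zero_le _) (lastAbove_le n d k)]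
  ring

end DegreeSequence

open DegreeSequence in
theorem stmt_10_general (n : ℕ) (d : ℕ → ℕ)
    (hdec : ∀ i j, 1 ≤ i → i ≤ j → j ≤ n → d j ≤ d i)
    (k p : ℕ)
    (hp : p = ((Finset.Icc 1 n).filter (fun q => k + 1 ≤ d q)).sup id)
    (hkp : k = ((Finset.Icc 1 n).filter (fun q => p + 1 ≤ d q)).sup id) :
    ((k : ℤ) * n - ∑ i ∈ Finset.Icc 1 k, (d i : ℤ) -
        ∑ i ∈ Finset.range (k + 1),
          ((k : ℤ) - i) * ((Finset.Icc 1 n).filter (fun t => d t = i)).card) =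
    ((p : ℤ) * n - ∑ i ∈ Finset.Icc 1 p, (d i : ℤ) -
        ∑ i ∈ Finset.range (p + 1),
          ((p : ℤ) - i) * ((Finset.Icc 1 n).filter (fun t => d t = i)).card) := by
  have hd : AntitoneOn d (Set.Icc 1 n) := fun i hi j hj hij => hdec i j hi.1 hij hj.2
  have hkp' : lastAbove n d k = p := hp.symm
  have hpk' : lastAbove n d p = k := hkp.symm
  change slack n d k = slack n d p
  rw [slack_eq n d hd, slack_eq n d hd, hkp', hpk']
  ring

theorem stmt_10 (n : ℕ) (hn : 0 < n) (d : ℕ → ℕ)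
    (hdec : ∀ i j, 1 ≤ i → i ≤ j → j ≤ n → d j ≤ d i)
    (hpos : ∀ i, 1 ≤ i → i ≤ n → 0 < d i)
    (hd1 : d 1 ≤ n)
    (k p : ℕ) (hk : k ≤ n) (hpn : p ≤ n)
    (hp : p = ((Finset.Icc 1 n).filter (fun q => k + 1 ≤ d q)).sup id)
    (hkp : k = ((Finset.Icc 1 n).filter (fun q => p + 1 ≤ d q)).sup id) :
    ((k : ℤ) * n - ∑ i ∈ Finset.Icc 1 k, (d i : ℤ) -
        ∑ i ∈ Finset.range (k + 1),
          ((k : ℤ) - i) * ((Finset.Icc 1 n).filter (fun t => d t = i)).card) =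
    ((p : ℤ) * n - ∑ i ∈ Finset.Icc 1 p, (d i : ℤ) -
        ∑ i ∈ Finset.range (p + 1),
          ((p : ℤ) - i) * ((Finset.Icc 1 n).filter (fun t => d t = i)).card) :=
  stmt_10_general n d hdec k p hp hkp
end

section
/- Let d = (d₁,…,dₙ) be a decreasing sequence of positive integers with maximum element a = d₁ ≤ n and minimum element b = dₙ, and let K = max{k : d_k ≥ k} be the largest strong index. Then for every strong index k with k > b, Σ_{i=1}^{k}(d_i + i·n_{k−i}) ≤ n(k−b) + K(a+b) − K², where n_j = #{i : d_i = j}. -/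
/-!
Bound the two halves of the sum separately. Monotonicity gives `∑ d_i ≤ k a`. For the second
half, `n_{k-i}` counts the indices `t` in the level set `d_t = k - i`; these level sets are
disjoint, a nonempty one forces `i ≤ k - b` (as `d_t ≥ b`), and every `t` in one of them has
`d_t < k ≤ K ≤ d_K`, hence `t > K`. So `∑ i n_{k-i} ≤ (k - b)(n - K)`, and the claimed bound
exceeds `k a + (k - b)(n - K)` by exactly `(K - k)(a - K) ≥ 0`.
-/

open Finset

def strongIndices (n : ℕ) (d : ℕ → ℕ) : Finset ℕ := {q ∈ Icc 1 n | q ≤ d q}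

/-- The paper's `n_j` is `#(levelSet n d j)`. -/
def levelSet (n : ℕ) (d : ℕ → ℕ) (j : ℕ) : Finset ℕ := {t ∈ Icc 1 n | d t = j}

theorem Finset.Nonempty.sup_id_mem {α : Type*} [LinearOrder α] [OrderBot α] {s : Finset α}
    (hs : s.Nonempty) : s.sup id ∈ s := by
  obtain ⟨m, hm, hmeq⟩ := exists_mem_eq_sup s hs id
  exact hmeq ▸ hm

theorem sum_mul_card_le_mul_card {ι α : Type*} [DecidableEq α] {s : Finset ι}
    {A : ι → Finset α} {U : Finset α} {f : ι → ℕ} {c : ℕ}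
    (hdisj : (s : Set ι).PairwiseDisjoint A) (hsub : ∀ i ∈ s, A i ⊆ U)
    (hf : ∀ i ∈ s, (A i).Nonempty → f i ≤ c) :
    ∑ i ∈ s, f i * #(A i) ≤ c * #U :=
  calc ∑ i ∈ s, f i * #(A i)
      ≤ ∑ i ∈ s, c * #(A i) := by
        refine sum_le_sum fun i hi => ?_
        obtain h | h := (A i).eq_empty_or_nonempty
        · simp [h]
        · exact Nat.mul_le_mul_right _ (hf i hi h)
    _ = c * #(s.biUnion A) := by rw [← mul_sum, card_biUnion hdisj]
    _ ≤ c * #U := Nat.mul_le_mul_left _ (card_le_card (biUnion_subset.mpr hsub))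

section Antitone

variable {n : ℕ} {d : ℕ → ℕ}

theorem mem_strongIndices {q : ℕ} :
    q ∈ strongIndices n d ↔ (1 ≤ q ∧ q ≤ n) ∧ q ≤ d q := by
  simp [strongIndices]

theorem pairwiseDisjoint_levelSet_sub (k : ℕ) :
    ((Icc 1 k : Finset ℕ) : Set ℕ).PairwiseDisjoint (fun i => levelSet n d (k - i)) := by
  have hinj : Set.InjOn (fun i => k - i) (Icc 1 k : Finset ℕ) := by
    intro i hi j hj h
    simp only [coe_Icc, Set.mem_Icc] at hi hj h
    omega
  exact hinj.pairwiseDisjoint_image.mp (Set.pairwiseDisjoint_filter d _ (Icc 1 n))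

theorem sum_Icc_le_mul (hd : AntitoneOn d (Set.Icc 1 n)) {k : ℕ} (hkn : k ≤ n) :
    ∑ i ∈ Icc 1 k, d i ≤ k * d 1 := by
  refine (sum_le_card_nsmul _ _ (d 1) fun i hi => ?_).trans_eq (by simp)
  obtain ⟨hi1, hik⟩ := mem_Icc.mp hi
  exact hd ⟨le_rfl, hi1.trans (hik.trans hkn)⟩ ⟨hi1, hik.trans hkn⟩ hi1

theorem lt_of_apply_lt_of_mem_strongIndices (hd : AntitoneOn d (Set.Icc 1 n)) {K t : ℕ}
    (hK : K ∈ strongIndices n d) (ht : 1 ≤ t ∧ t ≤ n) (hlt : d t < K) : K < t := by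
  rw [mem_strongIndices] at hK
  by_contra! htK
  exact (hK.2.trans (hd ht hK.1 htK)).not_gt hlt

theorem levelSet_subset_Ioc (hd : AntitoneOn d (Set.Icc 1 n)) {K j : ℕ}
    (hK : K ∈ strongIndices n d) (hj : j < K) : levelSet n d j ⊆ Ioc K n := by
  intro t ht
  simp only [levelSet, mem_filter, mem_Icc] at ht
  exact mem_Ioc.mpr ⟨lt_of_apply_lt_of_mem_strongIndices hd hK ht.1 (ht.2 ▸ hj), ht.1.2⟩

theorem le_sub_of_levelSet_nonempty (hd : AntitoneOn d (Set.Icc 1 n)) {k i : ℕ} (hi : i ≤ k)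
    (hne : (levelSet n d (k - i)).Nonempty) : i ≤ k - d n := by
  obtain ⟨t, ht⟩ := hne
  simp only [levelSet, mem_filter, mem_Icc] at ht
  have : d n ≤ d t := hd ht.1 ⟨ht.1.1.trans ht.1.2, le_rfl⟩ ht.1.2
  omega

theorem sum_mul_card_levelSet_le (hd : AntitoneOn d (Set.Icc 1 n)) {K k : ℕ}
    (hK : K ∈ strongIndices n d) (hkK : k ≤ K) :
    ∑ i ∈ Icc 1 k, i * #(levelSet n d (k - i)) ≤ (k - d n) * (n - K) := by
  rw [← Nat.card_Ioc K n]
  refine sum_mul_card_le_mul_card (pairwiseDisjoint_levelSet_sub k) (fun i hi => ?_)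
    (fun i hi => le_sub_of_levelSet_nonempty hd (mem_Icc.mp hi).2)
  obtain ⟨hi1, hik⟩ := mem_Icc.mp hi
  exact levelSet_subset_Ioc hd hK (by omega)

end Antitone

theorem stmt_13_general (n : ℕ) (d : ℕ → ℕ)
    (hdec : ∀ i j, 1 ≤ i → i ≤ j → j ≤ n → d j ≤ d i)
    (a b K : ℕ) (ha : a = d 1) (hb : b = d n)
    (hK : K = ((Finset.Icc 1 n).filter (fun q => q ≤ d q)).sup id)
    (k : ℕ) (hk1 : 1 ≤ k) (hkn : k ≤ n) (hstrong : k ≤ d k) (hkb : b < k) :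
    (∑ i ∈ Finset.Icc 1 k,
        ((d i : ℤ) + i * ((Finset.Icc 1 n).filter (fun t => d t = k - i)).card)) ≤
      (n : ℤ) * ((k : ℤ) - b) + (K : ℤ) * ((a : ℤ) + b) - (K : ℤ) ^ 2 := by
  have hd : AntitoneOn d (Set.Icc 1 n) := fun i hi j hj hij => hdec i j hi.1 hij hj.2
  change K = (strongIndices n d).sup id at hK
  have hkS : k ∈ strongIndices n d := mem_strongIndices.mpr ⟨⟨hk1, hkn⟩, hstrong⟩
  have hKS : K ∈ strongIndices n d := hK ▸ Nonempty.sup_id_mem ⟨k, hkS⟩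
  have hkK : k ≤ K := hK ▸ le_sup (f := id) hkS
  obtain ⟨⟨hK1, hKn⟩, hKd⟩ := mem_strongIndices.mp hKS
  have hKa : K ≤ a := ha ▸ hKd.trans (hd ⟨le_rfl, hK1.trans hKn⟩ ⟨hK1, hKn⟩ hK1)
  have hsum_d : ∑ i ∈ Icc 1 k, (d i : ℤ) ≤ k * a := by
    exact_mod_cast ha ▸ sum_Icc_le_mul hd hkn
  have hsum_level : ∑ i ∈ Icc 1 k, (i : ℤ) * #(levelSet n d (k - i)) ≤ (k - b) * (n - K) := by
    have := Nat.cast_le (α := ℤ) |>.mpr (hb ▸ sum_mul_card_levelSet_le hd hKS hkK)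
    push_cast [Nat.cast_sub hkb.le, Nat.cast_sub hKn] at this
    exact this
  have hslack : (0 : ℤ) ≤ (K - k) * (a - K) := mul_nonneg (by omega) (by omega)
  change ∑ i ∈ Icc 1 k, ((d i : ℤ) + i * #(levelSet n d (k - i))) ≤ _
  rw [sum_add_distrib]
  linear_combination hsum_d + hsum_level + hslack

theorem stmt_13 (n : ℕ) (hn : 0 < n) (d : ℕ → ℕ)
    (hdec : ∀ i j, 1 ≤ i → i ≤ j → j ≤ n → d j ≤ d i)
    (hpos : ∀ i, 1 ≤ i → i ≤ n → 0 < d i)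
    (a b K : ℕ) (ha : a = d 1) (han : a ≤ n) (hb : b = d n)
    (hK : K = ((Finset.Icc 1 n).filter (fun q => q ≤ d q)).sup id)
    (k : ℕ) (hk1 : 1 ≤ k) (hkn : k ≤ n) (hstrong : k ≤ d k) (hkb : b < k) :
    (∑ i ∈ Finset.Icc 1 k,
        ((d i : ℤ) + i * ((Finset.Icc 1 n).filter (fun t => d t = k - i)).card)) ≤
      (n : ℤ) * ((k : ℤ) - b) + (K : ℤ) * ((a : ℤ) + b) - (K : ℤ) ^ 2 :=
  stmt_13_general n d hdec a b K ha hb hK k hk1 hkn hstrong hkb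
end

section
/- The following two conditions on positive integers a, b, n with b ≤ a are equivalent: (i) nb ≥ (a+b)²/4; (ii) there exists a real number x ≥ 1 with a ≤ xb and a ≤ 4xn/(x+1)². -/
/-!
Take `x = a / b` for the forward direction. Conversely, the identity
`a b (x + 1)² - x (a + b)² = (a x - b)(b x - a)` shows `x (a + b)² ≤ a b (x + 1)²` whenever
`b ≤ a ≤ x b` and `x ≥ 1`, and `a (x + 1)² ≤ 4 x n` bounds the right side by `4 x n b`.
-/

lemma mul_sq_add_le_mul_mul_add_one_sq {a b x : ℝ} (hx : 1 ≤ x) (hba : b ≤ a) (hab : a ≤ x * b) :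
    x * (a + b) ^ 2 ≤ a * b * (x + 1) ^ 2 := by
  have hax : 0 ≤ a * x - b := by nlinarith
  have hbx : 0 ≤ b * x - a := by linarith
  nlinarith [mul_nonneg hax hbx]

lemma sq_add_le_of_mul_add_one_sq_le {a b n x : ℝ} (hx : 1 ≤ x) (hb : 0 ≤ b) (hba : b ≤ a)
    (hab : a ≤ x * b) (han : a * (x + 1) ^ 2 ≤ 4 * x * n) : (a + b) ^ 2 ≤ 4 * n * b := by
  have : x * (a + b) ^ 2 ≤ x * (4 * n * b) :=
    calc x * (a + b) ^ 2 ≤ a * (x + 1) ^ 2 * b := by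
          linarith [mul_sq_add_le_mul_mul_add_one_sq hx hba hab]
      _ ≤ 4 * x * n * b := mul_le_mul_of_nonneg_right han hb
      _ = x * (4 * n * b) := by ring
  exact le_of_mul_le_mul_left this (by linarith)

lemma mul_div_add_one_sq_le {a b n : ℝ} (hb : 0 < b) (hba : b ≤ a)
    (h : (a + b) ^ 2 ≤ 4 * n * b) : a * (a / b + 1) ^ 2 ≤ 4 * (a / b) * n := by
  have hab : a / b + 1 = (a + b) / b := by field_simp
  rw [hab, div_pow, mul_div_assoc', div_le_iff₀ (by positivity)]
  calc a * (a + b) ^ 2 ≤ a * (4 * n * b) := mul_le_mul_of_nonneg_left h (by linarith)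
    _ = 4 * (a / b) * n * b ^ 2 := by field_simp

theorem sq_add_le_iff_exists {a b n : ℝ} (hb : 0 < b) (hba : b ≤ a) :
    (a + b) ^ 2 ≤ 4 * n * b ↔ ∃ x : ℝ, 1 ≤ x ∧ a ≤ x * b ∧ a ≤ 4 * x * n / (x + 1) ^ 2 := by
  constructor
  · intro h
    refine ⟨a / b, (one_le_div hb).2 hba, (div_mul_cancel₀ a hb.ne').ge, ?_⟩
    have hx : 0 < a / b := div_pos (hb.trans_le hba) hb
    rw [le_div_iff₀ (by positivity)]
    exact mul_div_add_one_sq_le hb hba h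
  · rintro ⟨x, hx, hab, han⟩
    rw [le_div_iff₀ (by positivity)] at han
    exact sq_add_le_of_mul_add_one_sq_le hx hb.le hba hab han

theorem stmt_17_general (a b n : ℕ) (hb : 0 < b) (hba : b ≤ a) :
    4 * n * b ≥ (a + b) ^ 2 ↔
      ∃ x : ℝ, 1 ≤ x ∧ (a : ℝ) ≤ x * b ∧ (a : ℝ) ≤ 4 * x * n / (x + 1) ^ 2 := by
  rw [ge_iff_le, ← sq_add_le_iff_exists (by exact_mod_cast hb) (by exact_mod_cast hba)]
  exact_mod_cast Iff.rfl

theorem stmt_17 (a b n : ℕ) (ha : 0 < a) (hb : 0 < b) (hn : 0 < n) (hba : b ≤ a) :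
    4 * n * b ≥ (a + b) ^ 2 ↔
      ∃ x : ℝ, 1 ≤ x ∧ (a : ℝ) ≤ x * b ∧ (a : ℝ) ≤ 4 * x * n / (x + 1) ^ 2 :=
  stmt_17_general a b n hb hba
end
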